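/- arXiv:1405.6193 — 5 statements merged into one kernel-verified Lean document; each statement's English description precedes it below -/
import Mathlib

section
/- For every real α ≠ 0 and every x ≥ 0, α·φ(x)² - 2(1 + αx)·φ(x) + 2x ≤ 0. -/
/-! Put `t = α x`. Since `α φ(x) = 1 - e^{-t}`, the quantity `α g₂(x)` equals
`e^{-2t} - 1 + 2t e^{-t} = 2 e^{-t} (t - sinh t)`, so `g₂(x) = 2 e^{-t} (t - sinh t) / α`.
Now `t - sinh t` has the sign opposite to `t`, hence to `α` when `x ≥ 0`. -/

open Real

theorem quadratic_expm1_div_eq_sinh {α : ℝ} (hα : α ≠ 0) (x : ℝ) :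
    α * ((exp (-α * x) - 1) / (-α)) ^ 2 - 2 * (1 + α * x) * ((exp (-α * x) - 1) / (-α)) + 2 * x
      = 2 * exp (-(α * x)) * ((α * x - sinh (α * x)) / α) := by
  have hexp : exp (α * x) = (exp (-(α * x)))⁻¹ := by rw [exp_neg, inv_inv]
  rw [sinh_eq, hexp, neg_mul]
  field_simp
  ring

theorem self_sub_sinh_mul_div_nonpos (α : ℝ) {x : ℝ} (hx : 0 ≤ x) :
    (α * x - sinh (α * x)) / α ≤ 0 := by
  rcases le_total α 0 with hα | hα
  · exact div_nonpos_of_nonneg_of_nonpos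
      (sub_nonneg.2 (sinh_le_self_iff.2 (mul_nonpos_of_nonpos_of_nonneg hα hx))) hα
  · exact div_nonpos_of_nonpos_of_nonneg
      (sub_nonpos.2 (self_le_sinh_iff.2 (mul_nonneg hα hx))) hα

theorem stmt_3 (α : ℝ) (hα : α ≠ 0)
    (φ : ℝ → ℝ) (hφ : ∀ x, φ x = (Real.exp (-α * x) - 1) / (-α)) :
    ∀ x : ℝ, 0 ≤ x → α * (φ x) ^ 2 - 2 * (1 + α * x) * φ x + 2 * x ≤ 0 := by
  intro x hx
  rw [hφ, quadratic_expm1_div_eq_sinh hα]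
  exact mul_nonpos_of_nonneg_of_nonpos (by positivity) (self_sub_sinh_mul_div_nonpos α hx)
end

section
/- Let M : (0,∞) → ℝ be positive with positive derivative, α ∈ ℝ, φ(x) = (e^{-αx}-1)/(-α), A(x) = (φ(x)-x)/φ(x)², B(x) = (1-αx) + x·M'(x)/M(x), C(x) = x·e^{-αx}. Then B(x)² - 4A(x)C(x) > 0 for all x > 0. -/
open Real

/-!
With `t = α x` and `E = exp (-t)`, the product `A(x) C(x)` equals `t E (1 - E - t) / (1 - E)²`,
a function of `t` alone. For `t > 0` it is negative, because `E > 1 - t`. For every `t` one has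
`4 A C ≤ (1 - t)²`: multiplied by `(1 - E)²`, the difference is the square
`((E - 1)(1 + t) + 2t)²`. When `t < 0` this suffices, since then `B > 1 - t > 0`.
-/

lemma one_sub_exp_neg_ne_zero {t : ℝ} (ht : t ≠ 0) : 1 - exp (-t) ≠ 0 := by
  rw [sub_ne_zero, ne_comm, Ne, exp_eq_one_iff, neg_eq_zero]
  exact ht

noncomputable def productAC (t : ℝ) : ℝ :=
  t * exp (-t) * (1 - exp (-t) - t) / (1 - exp (-t)) ^ 2

lemma phi_sub_div_sq_mul_eq_productAC {α x : ℝ} (hα : α ≠ 0) (hx : x ≠ 0) :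
    ((exp (-α * x) - 1) / (-α) - x) / ((exp (-α * x) - 1) / (-α)) ^ 2 * (x * exp (-α * x))
      = productAC (α * x) := by
  have hE : 1 - exp (-α * x) ≠ 0 := by
    rw [neg_mul]
    exact one_sub_exp_neg_ne_zero (mul_ne_zero hα hx)
  have hE' : exp (-α * x) - 1 ≠ 0 := fun h => hE (by linarith)
  rw [productAC, ← neg_mul]
  field_simp
  ring

lemma four_mul_productAC_le (t : ℝ) : 4 * productAC t ≤ (1 - t) ^ 2 := by
  rw [productAC, ← mul_div_assoc]
  refine div_le_of_le_mul₀ (sq_nonneg _) (sq_nonneg _) ?_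
  nlinarith [sq_nonneg ((exp (-t) - 1) * (1 + t) + 2 * t)]

lemma productAC_neg {t : ℝ} (ht : 0 < t) : productAC t < 0 := by
  have hlt : -t + 1 < exp (-t) := add_one_lt_exp (neg_ne_zero.mpr ht.ne')
  refine div_neg_of_neg_of_pos ?_ ?_
  · exact mul_neg_of_pos_of_neg (mul_pos ht (exp_pos _)) (by linarith)
  · exact pow_pos (sub_pos.mpr (exp_lt_one_iff.mpr (neg_neg_of_pos ht))) 2

theorem stmt_14_general (α : ℝ) (hα : α ≠ 0)
    (M M' : ℝ → ℝ)
    (hMpos : ∀ x : ℝ, 0 < x → 0 < M x)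
    (hM'pos : ∀ x : ℝ, 0 < x → 0 < M' x)
    (φ A B C : ℝ → ℝ)
    (hφ : ∀ x, φ x = (Real.exp (-α * x) - 1) / (-α))
    (hA : ∀ x, A x = (φ x - x) / (φ x) ^ 2)
    (hB : ∀ x, B x = (1 - α * x) + x * M' x / M x)
    (hC : ∀ x, C x = x * Real.exp (-α * x)) :
    ∀ x : ℝ, 0 < x → 0 < (B x) ^ 2 - 4 * A x * C x := by
  intro x hx
  have hAC : A x * C x = productAC (α * x) := by
    rw [hA, hC, hφ]
    exact phi_sub_div_sq_mul_eq_productAC hα hx.ne'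
  rw [mul_assoc, hAC]
  rcases hα.lt_or_gt with hneg | hpos
  · have hBgt : 1 - α * x < B x := by
      have := div_pos (mul_pos hx (hM'pos x hx)) (hMpos x hx)
      rw [hB]
      linarith
    nlinarith [four_mul_productAC_le (α * x), mul_neg_of_neg_of_pos hneg hx]
  · nlinarith [productAC_neg (mul_pos hpos hx), sq_nonneg (B x)]

theorem stmt_14 (α : ℝ) (hα : α ≠ 0)
    (M M' : ℝ → ℝ)
    (hMpos : ∀ x : ℝ, 0 < x → 0 < M x)
    (hM'pos : ∀ x : ℝ, 0 < x → 0 < M' x)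
    (hM : ∀ x : ℝ, 0 < x → HasDerivAt M (M' x) x)
    (φ A B C : ℝ → ℝ)
    (hφ : ∀ x, φ x = (Real.exp (-α * x) - 1) / (-α))
    (hA : ∀ x, A x = (φ x - x) / (φ x) ^ 2)
    (hB : ∀ x, B x = (1 - α * x) + x * M' x / M x)
    (hC : ∀ x, C x = x * Real.exp (-α * x)) :
    ∀ x : ℝ, 0 < x → 0 < (B x) ^ 2 - 4 * A x * C x :=
  stmt_14_general α hα M M' hMpos hM'pos φ A B C hφ hA hB hC
end

section
/- For α ≤ 0 and x ≥ 0, the inequality 2x - (1+αx)φ(x) ≥ φ(x) - x holds, hence (1-αx) + |1 + αx - 2x/φ(x)| ≥ 2(φ(x)-x)/φ(x) for x > 0; consequently (B(x) + √(B(x)²-4A(x)C(x)))/(2A(x)) ≥ φ(x) whenever A(x) > 0 and B(x) ≥ 1 - αx. -/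
/-! With `u = -α x > 0` and `φ(x) = (e^u - 1)/(-α)`, the first inequality is equivalent to
`(2 - u) e^u ≤ 2 + 2u`, which for `u < 2` follows from `(1 - u/3)^3 ≤ e^{-u}` and a polynomial
inequality. The second is then elementary. For the third, `A φ² - B φ + C = φ (1 - α x - B) ≤ 0`,
so `φ` lies below the larger root of the quadratic `A y² - B y + C`. -/

open Real

theorem two_sub_mul_exp_le {u : ℝ} (hu : 0 ≤ u) : (2 - u) * exp u ≤ 2 + 2 * u := by
  rcases le_or_gt 2 u with h2 | h2
  · nlinarith [exp_pos u]
  have hcube : (1 - u / 3) ^ 3 ≤ exp (-u) := by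
    simpa using one_sub_div_pow_le_exp_neg (n := 3) (t := u) (by norm_num; linarith)
  have hpoly : 2 - u ≤ (2 + 2 * u) * (1 - u / 3) ^ 3 := by
    nlinarith [mul_nonneg (mul_nonneg hu hu) (by linarith : (0:ℝ) ≤ 2 - u),
      mul_nonneg hu (sq_nonneg (u - 3 / 2))]
  calc (2 - u) * exp u ≤ (2 + 2 * u) * exp (-u) * exp u := by
        gcongr
        exact hpoly.trans (by gcongr)
    _ = 2 + 2 * u := by rw [mul_assoc, ← exp_add, neg_add_cancel, exp_zero, mul_one]

noncomputable def expPhi (α x : ℝ) : ℝ := (exp (-α * x) - 1) / (-α)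

theorem neg_mul_expPhi {α : ℝ} (hα : α ≠ 0) (x : ℝ) : -α * expPhi α x = exp (-α * x) - 1 := by
  unfold expPhi
  field_simp

theorem expPhi_pos {α x : ℝ} (hα : α < 0) (hx : 0 < x) : 0 < expPhi α x :=
  div_pos (by simpa using mul_pos (neg_pos.2 hα) hx) (neg_pos.2 hα)

theorem expPhi_sub_le {α x : ℝ} (hα : α < 0) (hx : 0 ≤ x) :
    expPhi α x - x ≤ 2 * x - (1 + α * x) * expPhi α x := by
  have key := two_sub_mul_exp_le (mul_nonneg (neg_nonneg.2 hα.le) hx)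
  have hφ := neg_mul_expPhi hα.ne x
  refine le_of_mul_le_mul_left ?_ (neg_pos.2 hα)
  linear_combination key + (2 + α * x) * hφ

theorem two_mul_sub_div_le {p x a : ℝ} (hp : 0 < p) (hx : 0 ≤ x) (ha : a ≤ 0)
    (h : p - x ≤ 2 * x - (1 + a) * p) :
    2 * (p - x) / p ≤ (1 - a) + |1 + a - 2 * x / p| := by
  have hleft : (p - x) / p ≤ 2 * x / p - (1 + a) := by
    rw [div_le_iff₀ hp, sub_mul, div_mul_cancel₀ _ hp.ne']
    linarith
  have hright : (p - x) / p ≤ 1 - a := by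
    rw [sub_div, div_self hp.ne']
    linarith [div_nonneg hx hp.le]
  have habs := neg_le_abs (1 + a - 2 * x / p)
  rw [mul_div_assoc]
  linarith

theorem le_quadratic_root {a b c p : ℝ} (ha : 0 < a) (h : a * p ^ 2 - b * p + c ≤ 0) :
    p ≤ (b + √(b ^ 2 - 4 * a * c)) / (2 * a) := by
  have hsq : (2 * a * p - b) ^ 2 ≤ b ^ 2 - 4 * a * c := by nlinarith
  rw [le_div_iff₀ (by positivity)]
  linarith [(le_abs_self _).trans (abs_le_sqrt hsq)]

theorem stmt_16 (α : ℝ) (hα : α < 0)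
    (φ A C : ℝ → ℝ)
    (hφ : ∀ x, φ x = (Real.exp (-α * x) - 1) / (-α))
    (hA : ∀ x, A x = (φ x - x) / (φ x) ^ 2)
    (hC : ∀ x, C x = x * Real.exp (-α * x))
    (x : ℝ) (hx : 0 < x) (B : ℝ) (hB : 1 - α * x ≤ B) :
    (φ x - x ≤ 2 * x - (1 + α * x) * φ x) ∧
    (2 * (φ x - x) / φ x ≤ (1 - α * x) + |1 + α * x - 2 * x / φ x|) ∧
    (0 < A x →
      φ x ≤ (B + Real.sqrt (B ^ 2 - 4 * A x * C x)) / (2 * A x)) := by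
  have hφx : φ x = expPhi α x := hφ x
  have hpos := expPhi_pos hα hx
  have part1 := expPhi_sub_le hα hx.le
  rw [hφx]
  refine ⟨part1, two_mul_sub_div_le hpos hx.le (mul_neg_of_neg_of_pos hα hx).le part1, fun hApos => ?_⟩
  refine le_quadratic_root hApos ?_
  have hquad : A x * expPhi α x ^ 2 - B * expPhi α x + C x
      = expPhi α x * (1 - α * x - B) := by
    rw [hA x, hC x, hφx, div_mul_cancel₀ _ (pow_ne_zero 2 hpos.ne')]
    linear_combination (-x) * neg_mul_expPhi hα.ne x
  rw [hquad]
  exact mul_nonpos_of_nonneg_of_nonpos hpos.le (by linarith)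
end

section
/- Let α < 0 and φ(x) = (e^{-αx}-1)/(-α). For all x > 0, φ(x)² - x(3+αx)φ(x) + 2x² ≥ 0. -/
/-!
The quadratic splits as `(φ - x)² + x (x - (1 + αx) φ)`. With `t = -αx` the second bracket equals
`(1 - (1 - t) eᵗ) / (-α)`, which is nonnegative because `e⁻ᵗ ≥ 1 - t`.
-/

open Real

theorem Real.one_sub_mul_exp_le_one (t : ℝ) : (1 - t) * exp t ≤ 1 :=
  calc (1 - t) * exp t ≤ exp (-t) * exp t :=
        mul_le_mul_of_nonneg_right (one_sub_le_exp_neg t) (exp_pos t).le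
    _ = 1 := by rw [← exp_add, neg_add_cancel, exp_zero]

theorem one_add_mul_mul_exp_sub_one_div_le {α : ℝ} (hα : α < 0) (x : ℝ) :
    (1 + α * x) * ((exp (-α * x) - 1) / (-α)) ≤ x := by
  rw [mul_div_assoc', div_le_iff₀ (neg_pos.2 hα)]
  linear_combination one_sub_mul_exp_le_one (-α * x)

theorem stmt_17 (α : ℝ) (hα : α < 0)
    (φ : ℝ → ℝ) (hφ : ∀ x, φ x = (Real.exp (-α * x) - 1) / (-α)) :
    ∀ x : ℝ, 0 < x →
      0 ≤ (φ x) ^ 2 - x * (3 + α * x) * φ x + 2 * x ^ 2 := by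
  intro x hx
  have key : 0 ≤ x - (1 + α * x) * φ x :=
    sub_nonneg.2 (hφ x ▸ one_add_mul_mul_exp_sub_one_div_le hα x)
  have split : (φ x) ^ 2 - x * (3 + α * x) * φ x + 2 * x ^ 2
      = (φ x - x) ^ 2 + x * (x - (1 + α * x) * φ x) := by ring
  rw [split]
  exact add_nonneg (sq_nonneg _) (mul_nonneg hx.le key)
end

section
/- Let α ≥ 0, p > 0, k a nonnegative integer, and f(z) = z^k. Then r ↦ log( ∫_{|z|≤r} |z|^{kp} e^{-α|z|²} dA(z) / ∫_{|z|≤r} e^{-α|z|²} dA(z) ) is concave as a function of log r on (0,∞). -/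
/-!
In polar coordinates, with `y = r²` and `m = kp/2`, the ratio of the two disc integrals is
`Φₘ(y) / Φ₀(y)` with `Φₘ(y) = ∫₀ʸ uᵐ e^{-αu} du`, so the derivative of its logarithm in
`s = log y` is `eₘ(αy) - e₀(αy)`, where `eₘ(x) = 1 / ∫₀¹ sᵐ e^{x(1-s)} ds` is the elasticity
`y Φₘ'(y) / Φₘ(y)`. Concavity is thus the statement that `D = eₘ - e₀` decreases on `[0, ∞)`.
Integration by parts gives the Riccati equation `x eₘ' = eₘ (m + 1 - x - eₘ)`, hence
`x D' = G := eₘ (m + 1 - x - eₘ) - e₀ (1 - x - e₀)`. Now `G(0) = 0` and `G'(0) < 0`, and at a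
first zero `x > 0` of `G` one has `eₘ'(x) = e₀'(x) =: X ∈ (-1, 0)` and `0 < D(x) ≤ D(0) = m`, so
`G'(x) = X (m - 2D) - D < 0`. Hence `G` never becomes positive, and `D' ≤ 0`.
-/

open Real MeasureTheory Set Filter

theorem nonpos_of_hasDerivAt_neg_of_eq_zero {f f' : ℝ → ℝ} {a b : ℝ}
    (hf : ∀ x, HasDerivAt f (f' x) x) (ha : f a ≤ 0)
    (hzero : ∀ x, a ≤ x → f x = 0 → (∀ y ∈ Icc a x, f y ≤ 0) → f' x < 0) (hb : a ≤ b) :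
    f b ≤ 0 := by
  by_contra! hfb
  have hcont : Continuous f := continuous_iff_continuousAt.2 fun x => (hf x).continuousAt
  set S := {x ∈ Icc a b | 0 < f x}
  have hS : S.Nonempty := ⟨b, ⟨hb, le_rfl⟩, hfb⟩
  have hSbdd : BddBelow S := ⟨a, fun x hx => hx.1.1⟩
  -- `c` is where `f` first turns positive: `f c = 0` with `f ≤ 0` before, so `f' c < 0`
  -- makes `f` negative just after `c`, against `c = sInf S`.
  set c := sInf S
  have hac : a ≤ c := le_csInf hS fun x hx => hx.1.1
  have hbefore : ∀ y ∈ Ico a c, f y ≤ 0 := fun y hy => not_lt.1 fun hy' =>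
    hy.2.not_ge (csInf_le hSbdd ⟨⟨hy.1, hy.2.le.trans (csInf_le hSbdd ⟨⟨hb, le_rfl⟩, hfb⟩)⟩, hy'⟩)
  have hfc : f c = 0 := by
    refine le_antisymm ?_ ?_
    · rcases hac.eq_or_lt with hac | hac
      · exact hac ▸ ha
      · exact le_of_tendsto (hcont.tendsto c |>.mono_left nhdsWithin_le_nhds)
          (eventually_of_mem (Ico_mem_nhdsLT hac) hbefore)
    · exact closure_minimal (fun x hx => hx.2.le) (isClosed_le continuous_const hcont)
        (csInf_mem_closure hS hSbdd)
  have hf'c : f' c < 0 := hzero c hac hfc fun y hy =>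
    hy.2.lt_or_eq.elim (fun h => hbefore y ⟨hy.1, h⟩) fun h => h ▸ hfc.le
  obtain ⟨ε, hε, hsign⟩ := Metric.eventually_nhds_iff.1
    (eventually_nhdsWithin_sign_eq_of_deriv_neg (by rwa [(hf c).deriv]) hfc)
  obtain ⟨s, hsS, hsc⟩ := exists_lt_of_csInf_lt hS (lt_add_of_pos_right c hε)
  have hcs : c < s := (csInf_le hSbdd hsS).lt_of_ne fun h => hsS.2.ne' (h ▸ hfc)
  have := hsign (show dist s c < ε by rw [dist_eq, abs_of_pos (sub_pos.2 hcs)]; linarith)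
  rw [sign_pos hsS.2, sign_neg (sub_neg.2 hcs)] at this
  norm_num at this

theorem intervalIntegral_mul_comp_sq {g : ℝ → ℝ} (hg : Continuous g) (a b : ℝ) :
    ∫ y in a..b, y * g (y ^ 2) = 2⁻¹ * ∫ u in a ^ 2..b ^ 2, g u := by
  have hsq : ∀ y ∈ uIcc a b, HasDerivAt (fun y : ℝ => y ^ 2) (2 * y) y := fun y _ => by
    simpa using hasDerivAt_pow 2 y
  rw [← intervalIntegral.integral_comp_mul_deriv hsq (by fun_prop) hg,
    ← intervalIntegral.integral_const_mul]
  congr 1 with y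
  simp only [Function.comp]
  ring

theorem integral_closedBall_comp_sq_norm {g : ℝ → ℝ} (hg : Continuous g) {r : ℝ} (hr : 0 ≤ r) :
    ∫ z in Metric.closedBall (0 : ℂ) r, g (‖z‖ ^ 2) = π * ∫ u in (0 : ℝ)..r ^ 2, g u := by
  have hball : Metric.closedBall (0 : ℂ) r = norm ⁻¹' Iic r := by ext; simp
  have hind : (Iic r).indicator (fun y : ℝ => y ^ (2 - 1) • g (y ^ 2))
      = (Iic r).indicator (fun y : ℝ => y * g (y ^ 2)) := by simp
  rw [← integral_indicator measurableSet_closedBall, hball]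
  change ∫ z, (norm ⁻¹' Iic r).indicator ((fun y : ℝ => g (y ^ 2)) ∘ norm) z = _
  simp_rw [indicator_comp_right]
  rw [integral_fun_norm_addHaar volume (fun y => (Iic r).indicator (fun y => g (y ^ 2)) y),
    Complex.finrank_real_complex]
  simp_rw [← indicator_smul_apply (s := Iic r) (fun y : ℝ => y ^ (2 - 1))]
  rw [hind, setIntegral_indicator measurableSet_Iic, Ioi_inter_Iic,
    ← intervalIntegral.integral_of_le hr, intervalIntegral_mul_comp_sq hg]
  simp [Measure.real, Complex.volume_ball]
  ring

/-- `M(1, m + 2, x) / (m + 1)` for Kummer's confluent hypergeometric function `M`. -/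
noncomputable def kummerIntegral (m x : ℝ) : ℝ :=
  ∫ s in (0 : ℝ)..1, s ^ m * exp (x * (1 - s))

namespace kummerIntegral

variable {m : ℝ}

theorem continuous_integrand (hm : 0 ≤ m) (x : ℝ) :
    Continuous fun s : ℝ => s ^ m * exp (x * (1 - s)) :=
  (continuous_rpow_const hm).mul (by fun_prop)

theorem intervalIntegrable_integrand (hm : 0 ≤ m) (x : ℝ) :
    IntervalIntegrable (fun s : ℝ => s ^ m * exp (x * (1 - s))) volume 0 1 :=
  (continuous_integrand hm x).intervalIntegrable _ _

theorem pos (hm : 0 ≤ m) (x : ℝ) : 0 < kummerIntegral m x :=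
  intervalIntegral.intervalIntegral_pos_of_pos_on (intervalIntegrable_integrand hm x)
    (fun s hs => by have := hs.1; positivity) one_pos

theorem zero_right (hm : 0 ≤ m) : kummerIntegral m 0 = (m + 1)⁻¹ := by
  simp [kummerIntegral, integral_rpow (Or.inl (by linarith : (-1 : ℝ) < m)),
    zero_rpow (by linarith : m + 1 ≠ 0)]

theorem lt_of_pos (hm : 0 < m) (x : ℝ) : kummerIntegral m x < kummerIntegral 0 x := by
  refine intervalIntegral.integral_lt_integral_of_continuousOn_of_le_of_exists_lt one_pos
    (continuous_integrand hm.le x).continuousOn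
    (continuous_integrand le_rfl x).continuousOn (fun s hs => ?_) ⟨2⁻¹, by norm_num, ?_⟩
  · rw [rpow_zero, one_mul]
    exact mul_le_of_le_one_left (exp_pos _).le (rpow_le_one hs.1.le hs.2 hm.le)
  · rw [rpow_zero, one_mul]
    exact mul_lt_of_lt_one_left (exp_pos _) (rpow_lt_one (by norm_num) (by norm_num) hm)

/-- Integration by parts: the boundary term of `s ^ (m + 1) * exp (x * (1 - s))` is `1`. -/
theorem add_one_mul_sub_mul_add_one (hm : 0 ≤ m) (x : ℝ) :
    (m + 1) * kummerIntegral m x - x * kummerIntegral (m + 1) x = 1 := by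
  have hderiv : ∀ s ∈ uIcc (0 : ℝ) 1, HasDerivAt (fun s : ℝ => s ^ (m + 1) * exp (x * (1 - s)))
      ((m + 1) * (s ^ m * exp (x * (1 - s))) - x * (s ^ (m + 1) * exp (x * (1 - s)))) s := by
    intro s _
    have hpow : HasDerivAt (fun s : ℝ => s ^ (m + 1)) ((m + 1) * s ^ m) s := by
      simpa using hasDerivAt_rpow_const (x := s) (p := m + 1) (Or.inr (by linarith))
    have hexp : HasDerivAt (fun s : ℝ => exp (x * (1 - s))) (exp (x * (1 - s)) * -x) s := by
      simpa using (((hasDerivAt_id s).const_sub 1).const_mul x).exp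
    refine (hpow.mul hexp).congr_deriv ?_
    ring
  have hint := intervalIntegral.integral_eq_sub_of_hasDerivAt hderiv
    (((intervalIntegrable_integrand hm x).const_mul _).sub
      ((intervalIntegrable_integrand (by linarith) x).const_mul _))
  rw [intervalIntegral.integral_sub ((intervalIntegrable_integrand hm x).const_mul _)
    ((intervalIntegrable_integrand (by linarith) x).const_mul _),
    intervalIntegral.integral_const_mul, intervalIntegral.integral_const_mul] at hint
  simpa [kummerIntegral, zero_rpow (by linarith : m + 1 ≠ 0)] using hint

theorem norm_deriv_integrand_le (hm : 0 ≤ m) {s : ℝ} (hs : s ∈ Ioc (0 : ℝ) 1) (y : ℝ) :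
    ‖s ^ m * ((1 - s) * exp (y * (1 - s)))‖ ≤ exp |y| := by
  obtain ⟨hs₀, hs₁⟩ := hs
  have h1s : 0 ≤ 1 - s := by linarith
  rw [norm_of_nonneg (by positivity)]
  calc s ^ m * ((1 - s) * exp (y * (1 - s))) ≤ 1 * (1 * exp |y|) := by
        gcongr
        · exact rpow_le_one hs₀.le hs₁ hm
        · linarith
        · nlinarith [le_abs_self y, neg_abs_le y]
    _ = exp |y| := by ring

theorem hasDerivAt (hm : 0 ≤ m) (x : ℝ) :
    HasDerivAt (kummerIntegral m) (kummerIntegral m x - kummerIntegral (m + 1) x) x := by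
  have hbound : ∀ᵐ s ∂volume, s ∈ uIoc (0 : ℝ) 1 → ∀ y ∈ Metric.ball x 1,
      ‖s ^ m * ((1 - s) * exp (y * (1 - s)))‖ ≤ exp (|x| + 1) := by
    refine ae_of_all _ fun s hs y hy => ?_
    rw [uIoc_of_le zero_le_one] at hs
    rw [Metric.mem_ball, dist_eq] at hy
    refine (norm_deriv_integrand_le hm hs y).trans (exp_le_exp.2 ?_)
    linarith [abs_sub_abs_le_abs_sub y x]
  have hF' : ∀ᵐ s ∂volume, s ∈ uIoc (0 : ℝ) 1 → ∀ y ∈ Metric.ball x 1,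
      HasDerivAt (fun y => s ^ m * exp (y * (1 - s))) (s ^ m * ((1 - s) * exp (y * (1 - s)))) y :=
    ae_of_all _ fun s _ y _ => by
      simpa [mul_comm] using (((hasDerivAt_id y).mul_const (1 - s)).exp.const_mul (s ^ m))
  obtain ⟨-, hd⟩ := intervalIntegral.hasDerivAt_integral_of_dominated_loc_of_deriv_le
    (Metric.ball_mem_nhds x one_pos)
    (Eventually.of_forall fun y => (continuous_integrand hm y).aestronglyMeasurable)
    (intervalIntegrable_integrand hm x)
    ((continuous_rpow_const hm).mul (by fun_prop)).aestronglyMeasurable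
    hbound intervalIntegrable_const hF'
  refine hd.congr_deriv ?_
  unfold kummerIntegral
  rw [← intervalIntegral.integral_sub
    (intervalIntegrable_integrand hm x) (intervalIntegrable_integrand (by linarith) x)]
  refine intervalIntegral.integral_congr fun s hs => ?_
  rw [uIcc_of_le zero_le_one] at hs
  simp only [rpow_add_one' hs.1 (by linarith : m + 1 ≠ 0)]
  ring

end kummerIntegral

noncomputable def lowerIncGamma (m α y : ℝ) : ℝ := ∫ u in (0 : ℝ)..y, u ^ m * exp (-α * u)

theorem lowerIncGamma_eq_kummerIntegral (m α : ℝ) {y : ℝ} (hy : 0 < y) :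
    lowerIncGamma m α y = y ^ (m + 1) * exp (-α * y) * kummerIntegral m (α * y) := by
  have hsub := intervalIntegral.smul_integral_comp_mul_left
    (fun u : ℝ => u ^ m * exp (-α * u)) y (a := 0) (b := 1)
  rw [mul_zero, mul_one] at hsub
  rw [lowerIncGamma, ← hsub, kummerIntegral, smul_eq_mul, rpow_add_one hy.ne',
    ← intervalIntegral.integral_const_mul, ← intervalIntegral.integral_const_mul]
  refine intervalIntegral.integral_congr fun s hs => ?_
  rw [uIcc_of_le zero_le_one] at hs
  simp only [mul_rpow hy.le hs.1, show -α * (y * s) = -α * y + α * y * (1 - s) by ring, exp_add]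
  ring

theorem lowerIncGamma_pos {m : ℝ} (hm : 0 ≤ m) (α : ℝ) {y : ℝ} (hy : 0 < y) :
    0 < lowerIncGamma m α y := by
  rw [lowerIncGamma_eq_kummerIntegral m α hy]
  have := kummerIntegral.pos hm (α * y)
  positivity

/-- The elasticity `y Φ'(y) / Φ(y)` of `Φ = lowerIncGamma m 1`, at `y = x`. -/
noncomputable def elasticity (m x : ℝ) : ℝ := (kummerIntegral m x)⁻¹

/-- `x * (elasticity m - elasticity 0)'` at `x`, by `elasticity.mul_deriv`. -/
noncomputable def riccatiGap (m x : ℝ) : ℝ :=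
  elasticity m x * (m + 1 - x - elasticity m x) - elasticity 0 x * (1 - x - elasticity 0 x)

namespace elasticity

variable {m : ℝ}

theorem pos (hm : 0 ≤ m) (x : ℝ) : 0 < elasticity m x := inv_pos.2 (kummerIntegral.pos hm x)

theorem zero_right (hm : 0 ≤ m) : elasticity m 0 = m + 1 := by
  rw [elasticity, kummerIntegral.zero_right hm, inv_inv]

theorem lt_of_pos (hm : 0 < m) (x : ℝ) : elasticity 0 x < elasticity m x :=
  inv_strictAnti₀ (kummerIntegral.pos hm.le x) (kummerIntegral.lt_of_pos hm x)

theorem hasDerivAt (hm : 0 ≤ m) (x : ℝ) :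
    HasDerivAt (elasticity m)
      ((kummerIntegral (m + 1) x - kummerIntegral m x) / kummerIntegral m x ^ 2) x := by
  refine ((kummerIntegral.hasDerivAt hm x).inv (kummerIntegral.pos hm x).ne').congr_deriv ?_
  ring

theorem differentiable (hm : 0 ≤ m) : Differentiable ℝ (elasticity m) :=
  fun x => (hasDerivAt hm x).differentiableAt

theorem deriv_zero_right (hm : 0 ≤ m) : deriv (elasticity m) 0 = -(m + 1) / (m + 2) := by
  rw [(hasDerivAt hm 0).deriv, kummerIntegral.zero_right hm,
    kummerIntegral.zero_right (by linarith)]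
  field_simp
  ring

theorem mul_deriv (hm : 0 ≤ m) (x : ℝ) :
    x * deriv (elasticity m) x = elasticity m x * (m + 1 - x - elasticity m x) := by
  have hK := (kummerIntegral.pos hm x).ne'
  rw [(hasDerivAt hm x).deriv, elasticity]
  field_simp
  linear_combination -kummerIntegral.add_one_mul_sub_mul_add_one hm x

theorem deriv_zero_left_mem_Ioo {x : ℝ} (hx : 0 < x) : deriv (elasticity 0) x ∈ Ioo (-1) 0 := by
  have hibp := kummerIntegral.add_one_mul_sub_mul_add_one le_rfl x
  have hK₀ := kummerIntegral.pos le_rfl x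
  have hK₁ := kummerIntegral.pos zero_le_one x
  have hK₁₀ := kummerIntegral.lt_of_pos one_pos x
  rw [zero_add, one_mul] at hibp
  have he : elasticity 0 x ∈ Ioo (1 - x) 1 := by
    rw [elasticity, ← one_div, mem_Ioo, lt_div_iff₀ hK₀, div_lt_one hK₀]
    constructor <;> nlinarith
  have hriccati := mul_deriv le_rfl x
  rw [zero_add] at hriccati
  constructor <;> nlinarith [he.1, he.2, pos le_rfl x]

theorem mul_deriv_sub (hm : 0 ≤ m) (x : ℝ) :
    x * (deriv (elasticity m) x - deriv (elasticity 0) x) = riccatiGap m x := by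
  rw [mul_sub, mul_deriv hm, mul_deriv le_rfl, zero_add, riccatiGap]

theorem hasDerivAt_sub (hm : 0 ≤ m) (x : ℝ) :
    HasDerivAt (fun x => elasticity m x - elasticity 0 x)
      (deriv (elasticity m) x - deriv (elasticity 0) x) x :=
  (differentiable hm x).hasDerivAt.sub (differentiable le_rfl x).hasDerivAt

theorem antitoneOn_sub_Icc (hm : 0 ≤ m) {b : ℝ} (hG : ∀ y ∈ Icc 0 b, riccatiGap m y ≤ 0) :
    AntitoneOn (fun x => elasticity m x - elasticity 0 x) (Icc 0 b) := by
  refine antitoneOn_of_deriv_nonpos (convex_Icc 0 b)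
    (fun x _ => (hasDerivAt_sub hm x).continuousAt.continuousWithinAt)
    (fun x _ => (hasDerivAt_sub hm x).differentiableAt.differentiableWithinAt) fun x hx => ?_
  rw [interior_Icc] at hx
  rw [(hasDerivAt_sub hm x).deriv, ← mul_le_mul_iff_right₀ hx.1, mul_zero, mul_deriv_sub hm]
  exact hG x (Ioo_subset_Icc_self hx)

end elasticity

namespace riccatiGap

open elasticity

variable {m : ℝ}

theorem zero_right (hm : 0 ≤ m) : riccatiGap m 0 = 0 := by
  simp [riccatiGap, elasticity.zero_right hm, elasticity.zero_right le_rfl]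

theorem hasDerivAt (hm : 0 ≤ m) (x : ℝ) :
    HasDerivAt (riccatiGap m)
      (deriv (elasticity m) x * (m + 1 - x - elasticity m x)
        + elasticity m x * (-1 - deriv (elasticity m) x)
        - (deriv (elasticity 0) x * (1 - x - elasticity 0 x)
          + elasticity 0 x * (-1 - deriv (elasticity 0) x))) x := by
  have hm' := (differentiable hm x).hasDerivAt
  have h0 := (differentiable le_rfl x).hasDerivAt
  exact (hm'.mul (((hasDerivAt_id x).const_sub _).sub hm')).sub
    (h0.mul (((hasDerivAt_id x).const_sub _).sub h0))

theorem deriv_neg_of_eq_zero (hm : 0 < m) {x : ℝ} (hx : 0 ≤ x) (hG : riccatiGap m x = 0)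
    (hGle : ∀ y ∈ Icc 0 x, riccatiGap m y ≤ 0) : deriv (riccatiGap m) x < 0 := by
  rw [(hasDerivAt hm.le x).deriv]
  rcases hx.eq_or_lt with rfl | hx
  · rw [deriv_zero_right hm.le, deriv_zero_right le_rfl, elasticity.zero_right hm.le,
      elasticity.zero_right le_rfl]
    field_simp
    linarith
  obtain ⟨hX₁, hX₀⟩ := deriv_zero_left_mem_Ioo hx
  have hXm : deriv (elasticity m) x = deriv (elasticity 0) x := by
    have := mul_deriv_sub hm.le x
    rw [hG, mul_eq_zero, sub_eq_zero] at this
    exact this.resolve_left hx.ne'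
  have hDm : elasticity m x - elasticity 0 x ≤ m := by
    simpa [elasticity.zero_right hm.le, elasticity.zero_right le_rfl] using
      antitoneOn_sub_Icc hm.le hGle ⟨le_rfl, hx.le⟩ ⟨hx.le, le_rfl⟩ hx.le
  have hD := sub_pos.2 (elasticity.lt_of_pos hm x)
  -- with `X = e₀'(x)` and `D = eₘ(x) - e₀(x)` the derivative is `X (m - D) - (1 + X) D`
  rw [hXm]
  nlinarith [mul_pos hD (neg_lt_iff_pos_add'.1 hX₁),
    mul_nonneg (neg_nonneg.2 hX₀.le) (sub_nonneg.2 hDm)]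

theorem nonpos (hm : 0 < m) {x : ℝ} (hx : 0 ≤ x) : riccatiGap m x ≤ 0 :=
  nonpos_of_hasDerivAt_neg_of_eq_zero (fun x => (hasDerivAt hm.le x).differentiableAt.hasDerivAt)
    (zero_right hm.le).le (fun _ hx => deriv_neg_of_eq_zero hm hx) hx

end riccatiGap

theorem elasticity.antitoneOn_sub {m : ℝ} (hm : 0 ≤ m) :
    AntitoneOn (fun x => elasticity m x - elasticity 0 x) (Ici 0) := by
  rcases hm.eq_or_lt with rfl | hm
  · simpa using antitoneOn_const
  exact fun s hs t ht hst => antitoneOn_sub_Icc hm.le (fun y hy => riccatiGap.nonpos hm hy.1)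
    ⟨hs, hst⟩ ⟨ht, le_rfl⟩ hst

theorem hasDerivAt_log_lowerIncGamma_exp {m : ℝ} (hm : 0 ≤ m) (α s : ℝ) :
    HasDerivAt (fun s => log (lowerIncGamma m α (exp s))) (elasticity m (α * exp s)) s := by
  have hΦ : HasDerivAt (lowerIncGamma m α) (exp s ^ m * exp (-α * exp s)) (exp s) :=
    ((continuous_rpow_const hm).mul (by fun_prop)).integral_hasStrictDerivAt 0 _ |>.hasDerivAt
  refine ((hΦ.comp s (hasDerivAt_exp s)).log
    (lowerIncGamma_pos hm α (exp_pos s)).ne').congr_deriv ?_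
  have hK := (kummerIntegral.pos hm (α * exp s)).ne'
  rw [Function.comp_apply, lowerIncGamma_eq_kummerIntegral m α (exp_pos s),
    rpow_add_one (exp_pos s).ne', elasticity]
  field_simp

theorem concaveOn_log_lowerIncGamma_div {m α : ℝ} (hm : 0 ≤ m) (hα : 0 ≤ α) :
    ConcaveOn ℝ univ fun s => log (lowerIncGamma m α (exp s) / lowerIncGamma 0 α (exp s)) := by
  have hderiv : ∀ s, HasDerivAt
      (fun s => log (lowerIncGamma m α (exp s) / lowerIncGamma 0 α (exp s)))
      (elasticity m (α * exp s) - elasticity 0 (α * exp s)) s := fun s => by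
    refine ((hasDerivAt_log_lowerIncGamma_exp hm α s).sub
      (hasDerivAt_log_lowerIncGamma_exp le_rfl α s)).congr_of_eventuallyEq ?_
    exact Eventually.of_forall fun s => log_div (lowerIncGamma_pos hm α (exp_pos s)).ne'
      (lowerIncGamma_pos le_rfl α (exp_pos s)).ne'
  refine Antitone.concaveOn_univ_of_deriv (fun s => (hderiv s).differentiableAt) fun s t hst => ?_
  rw [(hderiv s).deriv, (hderiv t).deriv]
  have hs : 0 ≤ α * exp s := mul_nonneg hα (exp_pos s).le
  have ht : 0 ≤ α * exp t := mul_nonneg hα (exp_pos t).le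
  exact elasticity.antitoneOn_sub hm hs ht (mul_le_mul_of_nonneg_left (exp_le_exp.2 hst) hα)

theorem stmt_19 (α : ℝ) (hα : 0 ≤ α) (p : ℝ) (hp : 0 < p) (k : ℕ) :
    ConcaveOn ℝ Set.univ (fun t : ℝ =>
      Real.log
        ((∫ z in Metric.closedBall (0:ℂ) (Real.exp t),
            ‖z‖ ^ ((k : ℝ) * p) * Real.exp (-α * ‖z‖ ^ 2)) /
         (∫ z in Metric.closedBall (0:ℂ) (Real.exp t),
            Real.exp (-α * ‖z‖ ^ 2)))) := by
  have hdisc : ∀ m, 0 ≤ m → ∀ t, ∫ z in Metric.closedBall (0:ℂ) (exp t),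
      (‖z‖ ^ 2) ^ m * exp (-α * ‖z‖ ^ 2) = π * lowerIncGamma m α (exp (2 * t)) := fun m hm t => by
    rw [integral_closedBall_comp_sq_norm (g := fun u => u ^ m * exp (-α * u))
      ((continuous_rpow_const hm).mul (by fun_prop)) (exp_pos t).le, ← exp_nat_mul,
      Nat.cast_ofNat, lowerIncGamma]
  have hm : 0 ≤ (k : ℝ) * p / 2 := by positivity
  have hnum : ∀ t, ∫ z in Metric.closedBall (0:ℂ) (exp t), ‖z‖ ^ ((k : ℝ) * p) * exp (-α * ‖z‖ ^ 2)
      = π * lowerIncGamma ((k : ℝ) * p / 2) α (exp (2 * t)) := fun t => by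
    rw [← hdisc _ hm]
    refine setIntegral_congr_fun measurableSet_closedBall fun z _ => ?_
    rw [← rpow_natCast, ← rpow_mul (norm_nonneg z), Nat.cast_ofNat, mul_div_cancel₀ _ two_ne_zero]
  have hden : ∀ t, ∫ z in Metric.closedBall (0:ℂ) (exp t), exp (-α * ‖z‖ ^ 2)
      = π * lowerIncGamma 0 α (exp (2 * t)) := fun t => by
    simpa using hdisc 0 le_rfl t
  simp_rw [hnum, hden, mul_div_mul_left _ _ pi_ne_zero]
  exact (concaveOn_log_lowerIncGamma_div hm hα).comp_linearMap (LinearMap.lsmul ℝ ℝ 2)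
end
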